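/- arXiv:2506.20999 — 5 statements merged into one kernel-verified Lean document; each statement's English description precedes it below -/
import Mathlib

section
/- Let K ⊆ ℝ² be the convex hull of a finite set of points, let f : ℝ² → ℝ be an affine map, and let l₁, l₂ ∈ K be points such that K ∩ {z ∈ ℝ² | f(z) = 0} equals the segment [l₁,l₂]. Then K + [l₁,l₂] = (K ∩ {z | f(z) ≤ 0}) + (K ∩ {z | f(z) ≥ 0}), where + denotes Minkowski sum. -/
/-!
If `x ∈ K` lies on the side `f ≤ 0` and `y ∈ K` on the side `f ≥ 0`, the segment `[x, y]` meets
the cut at some `z`, and `x + y = (x + y - z) + z` where the reflection `x + y - z` of `z` through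
the midpoint of `[x, y]` stays in `[x, y] ⊆ K`. Conversely a point of `K` plus a point of the cut
splits by putting the cut point on the side opposite to the other summand.
-/

open Pointwise

section CutByAffineMap

variable {𝕜 E : Type*} [AddCommGroup E]

theorem add_sub_mem_segment [CommRing 𝕜] [PartialOrder 𝕜] [Module 𝕜 E] {x y z : E}
    (hz : z ∈ segment 𝕜 x y) :
    x + y - z ∈ segment 𝕜 x y := by
  obtain ⟨a, b, ha, hb, hab, rfl⟩ := hz
  obtain rfl : a = 1 - b := eq_sub_of_add_eq hab
  exact ⟨b, 1 - b, hb, ha, add_sub_cancel b 1, by module⟩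

theorem AffineMap.exists_mem_segment_eq_zero [Field 𝕜] [LinearOrder 𝕜] [IsStrictOrderedRing 𝕜]
    [Module 𝕜 E] (f : E →ᵃ[𝕜] 𝕜) {x y : E}
    (hx : f x ≤ 0) (hy : 0 ≤ f y) : ∃ z ∈ segment 𝕜 x y, f z = 0 := by
  have h : (0 : 𝕜) ∈ f '' segment 𝕜 x y := by
    rw [image_segment, segment_eq_Icc (hx.trans hy)]
    exact ⟨hx, hy⟩
  exact h

theorem add_inter_zero_subset [Ring 𝕜] [LinearOrder 𝕜] [Module 𝕜 E] (K : Set E) (f : E →ᵃ[𝕜] 𝕜) :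
    K + (K ∩ {z | f z = 0}) ⊆ (K ∩ {z | f z ≤ 0}) + (K ∩ {z | 0 ≤ f z}) := by
  rintro _ ⟨k, hk, s, ⟨hsK, hs⟩, rfl⟩
  rcases le_total (f k) 0 with hfk | hfk
  · exact ⟨k, ⟨hk, hfk⟩, s, ⟨hsK, hs.ge⟩, rfl⟩
  · exact ⟨s, ⟨hsK, hs.le⟩, k, ⟨hk, hfk⟩, add_comm s k⟩

theorem Convex.add_inter_zero_eq [Field 𝕜] [LinearOrder 𝕜] [IsStrictOrderedRing 𝕜]
    [Module 𝕜 E] {K : Set E} (hK : Convex 𝕜 K) (f : E →ᵃ[𝕜] 𝕜) :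
    K + (K ∩ {z | f z = 0}) = (K ∩ {z | f z ≤ 0}) + (K ∩ {z | 0 ≤ f z}) := by
  refine (add_inter_zero_subset K f).antisymm ?_
  rintro _ ⟨x, ⟨hxK, hx⟩, y, ⟨hyK, hy⟩, rfl⟩
  obtain ⟨z, hz, hfz⟩ := f.exists_mem_segment_eq_zero hx hy
  refine ⟨x + y - z, hK.segment_subset hxK hyK (add_sub_mem_segment hz), z,
    ⟨hK.segment_subset hxK hyK hz, hfz⟩, sub_add_cancel (x + y) z⟩

end CutByAffineMap

theorem polygon_cut_relation_general (P : Finset (ℝ × ℝ)) (K : Set (ℝ × ℝ))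
    (hK : K = convexHull ℝ (P : Set (ℝ × ℝ)))
    (f : (ℝ × ℝ) →ᵃ[ℝ] ℝ) (l₁ l₂ : ℝ × ℝ)
    (hcut : K ∩ {z : ℝ × ℝ | f z = 0} = segment ℝ l₁ l₂) :
    K + segment ℝ l₁ l₂ = (K ∩ {z : ℝ × ℝ | f z ≤ 0}) + (K ∩ {z : ℝ × ℝ | 0 ≤ f z}) := by
  have hconv : Convex ℝ K := hK ▸ convex_convexHull ℝ _
  rw [← hcut]
  exact hconv.add_inter_zero_eq f

/-- Cutting relation for polygons: if a polygon `K` (the convex hull of a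
finite set) is cut by the zero set of an affine map `f` into two pieces, and the cut
`K ∩ {f = 0}` is the segment `[l₁, l₂]`, then
`K + [l₁,l₂] = (K ∩ {f ≤ 0}) + (K ∩ {f ≥ 0})`. -/
theorem polygon_cut_relation (P : Finset (ℝ × ℝ)) (K : Set (ℝ × ℝ))
    (hK : K = convexHull ℝ (P : Set (ℝ × ℝ)))
    (f : (ℝ × ℝ) →ᵃ[ℝ] ℝ) (l₁ l₂ : ℝ × ℝ) (hl₁ : l₁ ∈ K) (hl₂ : l₂ ∈ K)
    (hcut : K ∩ {z : ℝ × ℝ | f z = 0} = segment ℝ l₁ l₂) :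
    K + segment ℝ l₁ l₂ = (K ∩ {z : ℝ × ℝ | f z ≤ 0}) + (K ∩ {z : ℝ × ℝ | 0 ≤ f z}) :=
  polygon_cut_relation_general P K hK f l₁ l₂ hcut
end

section
/- Let o = (0,0), let p, q ∈ ℝ², and set r = p − q. Then [o,p] + [o,q] + [o,r] = conv{o,p,q} + conv{o,p,r}, where + denotes Minkowski sum. -/
/-!
Taking convex hulls commutes with Minkowski sums and a segment is the hull of its endpoints, so
both sides are convex hulls of Minkowski sums of finite vertex sets. These two finite sets are
equal: each is `{0, p, q, p + q, p - q, 2p - q, 2p}`.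
-/

open Pointwise

theorem pair_add_pair_add_pair_sub_eq {E : Type*} [AddCommGroup E] (p q : E) :
    ({0, p} + {0, q} + {0, p - q} : Set E) = {0, p, q} + {0, p, p - q} := by
  ext x
  simp only [Set.mem_add, Set.mem_insert_iff, Set.mem_singleton_iff, or_and_right, exists_or,
    exists_eq_left, exists_eq_left', or_assoc]
  constructor
  · rintro (rfl | rfl | rfl | rfl | rfl | rfl | rfl | rfl) <;> abel_nf <;> simp
  · rintro (rfl | rfl | rfl | rfl | rfl | rfl | rfl | rfl | rfl) <;> abel_nf <;> simp

theorem segment_add_segment_add_segment_sub_eq {𝕜 E : Type*} [Field 𝕜] [LinearOrder 𝕜]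
    [IsStrictOrderedRing 𝕜] [AddCommGroup E] [Module 𝕜 E] (p q : E) :
    segment 𝕜 0 p + segment 𝕜 0 q + segment 𝕜 0 (p - q) =
      convexHull 𝕜 {0, p, q} + convexHull 𝕜 {0, p, p - q} := by
  simp only [← convexHull_pair, ← convexHull_add]
  rw [pair_add_pair_add_pair_sub_eq]

/-- For `o = (0,0)`, `p, q ∈ ℝ²` and `r = p − q`,
`[o,p] + [o,q] + [o,r] = conv{o,p,q} + conv{o,p,r}`. -/
theorem segments_sum_eq_triangles_sum (p q r : ℝ × ℝ) (hr : r = p - q) :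
    segment ℝ ((0, 0) : ℝ × ℝ) p + segment ℝ ((0, 0) : ℝ × ℝ) q +
        segment ℝ ((0, 0) : ℝ × ℝ) r =
      convexHull ℝ ({((0, 0) : ℝ × ℝ), p, q} : Set (ℝ × ℝ)) +
        convexHull ℝ ({((0, 0) : ℝ × ℝ), p, r} : Set (ℝ × ℝ)) := by
  subst hr
  exact segment_add_segment_add_segment_sub_eq p q
end

section
/- Let p = (a,b) ∈ ℤ² with gcd(a,b) = 1 (so the segment from the origin o to p is prime), and suppose p is none of (1,0), (−1,0), (0,1), (0,−1). Then there exists q = (a',b') ∈ ℤ² such that: |a·b' − b·a'| = 1 (so the triangles conv{o,p,q} and conv{o,p,p−q} are minimum triangles, and the segments [o,q] and [o,p−q] are prime), the Euclidean length of [o,q] is strictly less than that of [o,p], and the Euclidean length of [o,p−q] is strictly less than that of [o,p]. -/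
/-!
Write `N = a² + b²` and, for `q = (c, e)`, `d = a c + b e` and `δ = a e − b c`, so that
`N (c² + e²) = d² + δ²`. A Bézout relation gives `q` with `δ = 1`, and replacing `q` by `q − t p`
keeps `δ` while moving `d` into `[0, N)`; `d = 0` would force `N = 1`. Then `1 ≤ d ≤ N − 1`, so
`N |q|² = d² + 1 < N²`, while `p − q` has `δ = −1` and
`d` replaced by `N − d`, which lies in the same range.
-/

theorem sq_add_sq_mul_sq_add_sq_eq_dot_sq_add_det_sq {R : Type*} [CommRing R] (a b c e : R) :
    (a ^ 2 + b ^ 2) * (c ^ 2 + e ^ 2) = (a * c + b * e) ^ 2 + (a * e - b * c) ^ 2 := by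
  ring

section PrimeSegment

variable {a b c e : ℤ}

theorem sq_add_sq_lt_of_abs_det_eq_one (hdet : |a * e - b * c| = 1)
    (hpos : 0 < a * c + b * e) (hlt : a * c + b * e < a ^ 2 + b ^ 2) :
    c ^ 2 + e ^ 2 < a ^ 2 + b ^ 2 := by
  have hid := sq_add_sq_mul_sq_add_sq_eq_dot_sq_add_det_sq a b c e
  rw [← sq_abs (a * e - b * c), hdet] at hid
  have hsq : (a * c + b * e) ^ 2 + 1 < (a ^ 2 + b ^ 2) * (a ^ 2 + b ^ 2) := by nlinarith
  exact lt_of_mul_lt_mul_left (hid ▸ hsq) (by positivity)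

theorem dot_ne_zero_of_abs_det_eq_one (hdet : |a * e - b * c| = 1) (hN : 2 ≤ a ^ 2 + b ^ 2) :
    a * c + b * e ≠ 0 := by
  intro hdot
  have hid := sq_add_sq_mul_sq_add_sq_eq_dot_sq_add_det_sq a b c e
  rw [← sq_abs (a * e - b * c), hdet, hdot] at hid
  have hN₁ : a ^ 2 + b ^ 2 = 1 :=
    Int.eq_one_of_mul_eq_one_right (by positivity) (by simpa using hid)
  omega

theorem exists_det_eq_one_dot_mem_Ico (hgcd : Int.gcd a b = 1) (hN : 0 < a ^ 2 + b ^ 2) :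
    ∃ c e : ℤ, a * e - b * c = 1 ∧ 0 ≤ a * c + b * e ∧ a * c + b * e < a ^ 2 + b ^ 2 := by
  obtain ⟨u, v, huv⟩ := Int.isCoprime_iff_gcd_eq_one.mpr hgcd
  set d := b * u - a * v with hd
  set t := d / (a ^ 2 + b ^ 2)
  refine ⟨-v - t * a, u - t * b, by linear_combination huv, ?_⟩
  have hdot : a * (-v - t * a) + b * (u - t * b) = d % (a ^ 2 + b ^ 2) := by
    linear_combination -Int.mul_ediv_add_emod d (a ^ 2 + b ^ 2) - hd
  rw [hdot]
  exact ⟨Int.emod_nonneg d hN.ne', Int.emod_lt_of_pos d hN⟩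

theorem two_le_sq_add_sq_of_gcd_eq_one (hgcd : Int.gcd a b = 1)
    (h₁ : (a, b) ≠ (1, 0)) (h₂ : (a, b) ≠ (-1, 0)) (h₃ : (a, b) ≠ (0, 1))
    (h₄ : (a, b) ≠ (0, -1)) : 2 ≤ a ^ 2 + b ^ 2 := by
  by_contra! hlt
  have ha : a ^ 2 ≤ 1 := by nlinarith
  have hb : b ^ 2 ≤ 1 := by nlinarith
  obtain ⟨ha₁, ha₂⟩ := abs_le.mp (sq_le_one_iff_abs_le_one a |>.mp ha)
  obtain ⟨hb₁, hb₂⟩ := abs_le.mp (sq_le_one_iff_abs_le_one b |>.mp hb)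
  interval_cases a <;> interval_cases b <;> simp_all

end PrimeSegment

/-- For a prime segment from the origin to `p = (a,b) ∈ ℤ²`
(`gcd(a,b) = 1`) with `p` none of `(±1,0)`, `(0,±1)`, there exists `q = (a',b') ∈ ℤ²`
with `|a·b' − b·a'| = 1` such that both `[o,q]` and `[o,p−q]` are strictly shorter
(in Euclidean length) than `[o,p]`. -/
theorem exists_shorter_prime_segment (a b : ℤ) (hgcd : Int.gcd a b = 1)
    (h₁ : (a, b) ≠ ((1 : ℤ), (0 : ℤ))) (h₂ : (a, b) ≠ ((-1 : ℤ), (0 : ℤ)))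
    (h₃ : (a, b) ≠ ((0 : ℤ), (1 : ℤ))) (h₄ : (a, b) ≠ ((0 : ℤ), (-1 : ℤ))) :
    ∃ a' b' : ℤ, |a * b' - b * a'| = 1 ∧
      Real.sqrt ((a' : ℝ) ^ 2 + (b' : ℝ) ^ 2) < Real.sqrt ((a : ℝ) ^ 2 + (b : ℝ) ^ 2) ∧
      Real.sqrt (((a - a' : ℤ) : ℝ) ^ 2 + ((b - b' : ℤ) : ℝ) ^ 2) <
        Real.sqrt ((a : ℝ) ^ 2 + (b : ℝ) ^ 2) := by
  have hN := two_le_sq_add_sq_of_gcd_eq_one hgcd h₁ h₂ h₃ h₄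
  obtain ⟨c, e, hdet, hdot₀, hdotN⟩ := exists_det_eq_one_dot_mem_Ico hgcd (by omega)
  have habs : |a * e - b * c| = 1 := by rw [hdet, abs_one]
  have hdot : 0 < a * c + b * e :=
    lt_of_le_of_ne hdot₀ (dot_ne_zero_of_abs_det_eq_one habs hN).symm
  have hq := sq_add_sq_lt_of_abs_det_eq_one habs hdot hdotN
  have hpq : (a - c) ^ 2 + (b - e) ^ 2 < a ^ 2 + b ^ 2 :=
    sq_add_sq_lt_of_abs_det_eq_one (by rw [← habs, ← abs_neg]; ring_nf)
      (by linarith) (by linarith)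
  refine ⟨c, e, habs, Real.sqrt_lt_sqrt (by positivity) ?_, Real.sqrt_lt_sqrt (by positivity) ?_⟩
  · exact_mod_cast hq
  · exact_mod_cast hpq
end

section
/- Let o = (0,0) and let p = (a,b) ∈ ℤ² with gcd(a,b) = 1, p not equal to any of (1,0), (−1,0), (0,1), (0,−1). Then there exist q ∈ ℤ² and r = p − q such that [o,q] and [o,r] are prime segments of Euclidean length strictly less than that of [o,p], the triangles conv{o,p,q} and conv{o,p,r} are minimum triangles, and [o,p] + [o,q] + [o,r] = conv{o,p,q} + conv{o,p,r}, where + denotes Minkowski sum. (Equivalently, [o,p] = conv{o,p,q} + conv{o,p,r} − [o,q] − [o,r] as a signed Minkowski decomposition.) -/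
open Pointwise

/-- The embedding of `ℤ²` into `ℝ²`. -/
noncomputable def toR (p : ℤ × ℤ) : ℝ × ℝ := ((p.1 : ℝ), (p.2 : ℝ))


lemma mem_segment_zero {v x : ℝ × ℝ} :
    x ∈ segment ℝ (0 : ℝ × ℝ) v ↔ ∃ t : ℝ, 0 ≤ t ∧ t ≤ 1 ∧ x = t • v := by
  rw [segment_eq_image]
  constructor
  · rintro ⟨t, ⟨h0, h1⟩, rfl⟩
    exact ⟨t, h0, h1, by simp⟩
  · rintro ⟨t, h0, h1, rfl⟩
    exact ⟨t, ⟨h0, h1⟩, by simp⟩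

lemma mem_tri {A B x : ℝ × ℝ} :
    x ∈ convexHull ℝ ({0, A, B} : Set (ℝ × ℝ)) ↔
      ∃ α β : ℝ, 0 ≤ α ∧ 0 ≤ β ∧ α + β ≤ 1 ∧ x = α • A + β • B := by
  rw [convexHull_insert (by simp : ({A, B} : Set (ℝ × ℝ)).Nonempty), convexHull_pair]
  constructor
  · rintro h
    rw [mem_convexJoin] at h
    obtain ⟨z, hz, w, hw, hx⟩ := h
    rw [Set.mem_singleton_iff] at hz
    subst hz
    rw [segment_eq_image] at hw
    obtain ⟨u, ⟨hu0, hu1⟩, rfl⟩ := hw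
    rw [mem_segment_zero] at hx
    obtain ⟨t, ht0, ht1, rfl⟩ := hx
    refine ⟨t * (1 - u), t * u, mul_nonneg ht0 (by linarith), mul_nonneg ht0 hu0, by nlinarith, ?_⟩
    simp [smul_add, smul_smul]
  · rintro ⟨α, β, hα, hβ, hs, rfl⟩
    rw [mem_convexJoin]
    rcases eq_or_lt_of_le (by linarith : (0:ℝ) ≤ α + β) with h | h
    · refine ⟨0, rfl, A, left_mem_segment ℝ A B, ?_⟩
      have hα0 : α = 0 := by linarith
      have hβ0 : β = 0 := by linarith
      rw [hα0, hβ0]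
      simpa using left_mem_segment ℝ (0 : ℝ × ℝ) A
    · refine ⟨0, rfl, (α / (α + β)) • A + (β / (α + β)) • B, ?_, ?_⟩
      · rw [segment_eq_image]
        exact ⟨β / (α + β), ⟨by positivity, by rw [div_le_one h]; linarith⟩, by
          field_simp; rw [add_sub_cancel_right]⟩
      · rw [mem_segment_zero]
        refine ⟨α + β, le_of_lt h, hs, ?_⟩
        rw [smul_add, smul_smul, smul_smul]
        field_simp

lemma geom (Q R : ℝ × ℝ) :
    segment ℝ (0 : ℝ × ℝ) (Q + R) + segment ℝ (0 : ℝ × ℝ) Q + segment ℝ (0 : ℝ × ℝ) R =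
      convexHull ℝ ({0, Q + R, Q} : Set (ℝ × ℝ)) +
        convexHull ℝ ({0, Q + R, R} : Set (ℝ × ℝ)) := by
  ext x
  constructor
  · intro hx
    obtain ⟨w, hw, z, hz, rfl⟩ := Set.mem_add.mp hx
    obtain ⟨a, ha, b, hb, rfl⟩ := Set.mem_add.mp hw
    obtain ⟨s, hs0, hs1, rfl⟩ := mem_segment_zero.mp ha
    obtain ⟨t, ht0, ht1, rfl⟩ := mem_segment_zero.mp hb
    obtain ⟨u, hu0, hu1, rfl⟩ := mem_segment_zero.mp hz
    rcases le_total u t with h | h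
    · set γ : ℝ := min (s + u) 1 with hγ
      have hγ0 : 0 ≤ γ := le_min (by linarith) (by norm_num)
      have hγ1 : γ ≤ 1 := min_le_right _ _
      have hγ2 : γ ≤ s + u := min_le_left _ _
      have hγ3 : s + t - 1 ≤ γ := le_min (by linarith) (by linarith)
      refine Set.mem_add.mpr ⟨(s + u - γ) • (Q + R) + (t - u) • Q,
        mem_tri.mpr ⟨s + u - γ, t - u, by linarith, by linarith, by linarith, rfl⟩,
        γ • (Q + R) + (0:ℝ) • R,
        mem_tri.mpr ⟨γ, 0, hγ0, le_refl 0, by linarith, rfl⟩, by module⟩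
    · set α : ℝ := min (s + t) 1 with hα
      have hα0 : 0 ≤ α := le_min (by linarith) (by norm_num)
      have hα1 : α ≤ 1 := min_le_right _ _
      have hα2 : α ≤ s + t := min_le_left _ _
      have hα3 : s + u - 1 ≤ α := le_min (by linarith) (by linarith)
      refine Set.mem_add.mpr ⟨α • (Q + R) + (0:ℝ) • Q,
        mem_tri.mpr ⟨α, 0, hα0, le_refl 0, by linarith, rfl⟩,
        (s + t - α) • (Q + R) + (u - t) • R,
        mem_tri.mpr ⟨s + t - α, u - t, by linarith, by linarith, by linarith, rfl⟩,
        by module⟩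
  · intro hx
    obtain ⟨a, ha, b, hb, rfl⟩ := Set.mem_add.mp hx
    obtain ⟨α, β, hα0, hβ0, hαβ, rfl⟩ := mem_tri.mp ha
    obtain ⟨γ, δ, hγ0, hδ0, hγδ, rfl⟩ := mem_tri.mp hb
    set σ : ℝ := α + γ with hσ
    set s : ℝ := max 0 (max (σ + β - 1) (σ + δ - 1)) with hsdef
    have hs0 : 0 ≤ s := le_max_left _ _
    have hs1 : s ≤ 1 := max_le (by norm_num) (max_le (by linarith) (by linarith))
    have hsb : σ + β - 1 ≤ s := le_trans (le_max_left _ _) (le_max_right _ _)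
    have hsd : σ + δ - 1 ≤ s := le_trans (le_max_right _ _) (le_max_right _ _)
    have hsub : s ≤ σ + β := max_le (by linarith) (max_le (by linarith) (by linarith))
    have hsud : s ≤ σ + δ := max_le (by linarith) (max_le (by linarith) (by linarith))
    refine Set.mem_add.mpr ⟨s • (Q + R) + (σ + β - s) • Q,
      Set.mem_add.mpr ⟨s • (Q + R), mem_segment_zero.mpr ⟨s, hs0, hs1, rfl⟩,
        (σ + β - s) • Q, mem_segment_zero.mpr ⟨σ + β - s, by linarith, by linarith, rfl⟩, rfl⟩,
      (σ + δ - s) • R,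
      mem_segment_zero.mpr ⟨σ + δ - s, by linarith, by linarith, rfl⟩, by module⟩


lemma exists_q (a b : ℤ) (hgcd : Int.gcd a b = 1) (hL : 2 ≤ a ^ 2 + b ^ 2) :
    ∃ q1 q2 : ℤ, a * q2 - b * q1 = 1 ∧ 1 ≤ a * q1 + b * q2 ∧
      a * q1 + b * q2 ≤ a ^ 2 + b ^ 2 - 1 := by
  obtain ⟨u, v, huv⟩ := Int.isCoprime_iff_gcd_eq_one.mpr hgcd
  set L := a ^ 2 + b ^ 2 with hLdef
  set m0 := a * (-v) + b * u with hm0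
  set t := -(m0 / L) with ht
  clear_value t m0 L
  have hL0 : (0:ℤ) < L := by linarith
  have hcross : a * (u + t * b) - b * (-v + t * a) = 1 := by linear_combination huv
  have hmod : a * (-v + t * a) + b * (u + t * b) = m0 % L := by
    rw [ht, hm0, hLdef, Int.emod_def]; ring
  have hge : 0 ≤ m0 % L := Int.emod_nonneg m0 (by linarith)
  have hlt : m0 % L < L := Int.emod_lt_of_pos m0 hL0
  have hne : m0 % L ≠ 0 := by
    intro h0
    have hd : a * (-v + t * a) + b * (u + t * b) = 0 := by rw [hmod, h0]
    have hid : (a * (-v + t * a) + b * (u + t * b)) ^ 2 +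
        (a * (u + t * b) - b * (-v + t * a)) ^ 2 =
        (a ^ 2 + b ^ 2) * ((-v + t * a) ^ 2 + (u + t * b) ^ 2) := by ring
    rw [hd, hcross] at hid
    have hN : 0 ≤ (-v + t * a) ^ 2 + (u + t * b) ^ 2 := by positivity
    rw [← hLdef] at hid
    rcases hN.lt_or_eq with h | h
    · nlinarith [mul_le_mul hL (by linarith : (1:ℤ) ≤ (-v + t * a) ^ 2 + (u + t * b) ^ 2)
        one_pos.le (by linarith : (0:ℤ) ≤ L)]
    · rw [← h, mul_zero] at hid; norm_num at hid
  refine ⟨-v + t * a, u + t * b, hcross, ?_, ?_⟩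
  · rw [hmod]; omega
  · rw [hmod]; omega

lemma short (a b q1 q2 : ℤ) (hcross : (a * q2 - b * q1) ^ 2 = 1)
    (h1 : 1 ≤ a * q1 + b * q2) (h2 : a * q1 + b * q2 ≤ a ^ 2 + b ^ 2 - 1)
    (hL : 2 ≤ a ^ 2 + b ^ 2) : q1 ^ 2 + q2 ^ 2 < a ^ 2 + b ^ 2 := by
  have hid : (a * q1 + b * q2) ^ 2 + (a * q2 - b * q1) ^ 2 =
      (a ^ 2 + b ^ 2) * (q1 ^ 2 + q2 ^ 2) := by ring
  nlinarith [mul_nonneg (by linarith : (0:ℤ) ≤ a ^ 2 + b ^ 2 - 1 - (a * q1 + b * q2))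
      (by linarith : (0:ℤ) ≤ a ^ 2 + b ^ 2 - 1 + (a * q1 + b * q2)), hid, hcross]

/-- For a prime segment `[o,p]` (`p ∈ ℤ²`, `gcd(p₁,p₂)=1`, `p` not a
unit coordinate vector) there exist `q ∈ ℤ²` and `r = p − q` such that `[o,q]`, `[o,r]`
are prime segments strictly shorter than `[o,p]`, the triangles `conv{o,p,q}` and
`conv{o,p,r}` are minimum triangles, and
`[o,p] + [o,q] + [o,r] = conv{o,p,q} + conv{o,p,r}`. -/
theorem prime_segment_decomposition (p : ℤ × ℤ) (hgcd : Int.gcd p.1 p.2 = 1)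
    (h₁ : p ≠ ((1 : ℤ), (0 : ℤ))) (h₂ : p ≠ ((-1 : ℤ), (0 : ℤ)))
    (h₃ : p ≠ ((0 : ℤ), (1 : ℤ))) (h₄ : p ≠ ((0 : ℤ), (-1 : ℤ))) :
    ∃ q r : ℤ × ℤ, r = p - q ∧
      Int.gcd q.1 q.2 = 1 ∧ Int.gcd r.1 r.2 = 1 ∧
      Real.sqrt ((q.1 : ℝ) ^ 2 + (q.2 : ℝ) ^ 2) <
        Real.sqrt ((p.1 : ℝ) ^ 2 + (p.2 : ℝ) ^ 2) ∧
      Real.sqrt ((r.1 : ℝ) ^ 2 + (r.2 : ℝ) ^ 2) <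
        Real.sqrt ((p.1 : ℝ) ^ 2 + (p.2 : ℝ) ^ 2) ∧
      |p.1 * q.2 - p.2 * q.1| = 1 ∧ |p.1 * r.2 - p.2 * r.1| = 1 ∧
      segment ℝ ((0, 0) : ℝ × ℝ) (toR p) + segment ℝ ((0, 0) : ℝ × ℝ) (toR q) +
          segment ℝ ((0, 0) : ℝ × ℝ) (toR r) =
        convexHull ℝ ({((0, 0) : ℝ × ℝ), toR p, toR q} : Set (ℝ × ℝ)) +
          convexHull ℝ ({((0, 0) : ℝ × ℝ), toR p, toR r} : Set (ℝ × ℝ)) := by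
  obtain ⟨a, b⟩ := p
  simp only [Ne, Prod.mk.injEq, not_and] at h₁ h₂ h₃ h₄
  simp only at hgcd
  have hL2 : 2 ≤ a ^ 2 + b ^ 2 := by
    rcases lt_or_ge (a ^ 2 + b ^ 2) 2 with h | h
    · exfalso
      have ha1 : -1 ≤ a := by nlinarith [sq_nonneg a, sq_nonneg b]
      have ha2 : a ≤ 1 := by nlinarith [sq_nonneg a, sq_nonneg b]
      have hb1 : -1 ≤ b := by nlinarith [sq_nonneg a, sq_nonneg b]
      have hb2 : b ≤ 1 := by nlinarith [sq_nonneg a, sq_nonneg b]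
      interval_cases a <;> interval_cases b <;> simp_all
    · exact h
  obtain ⟨q1, q2, hcross, hm1, hm2⟩ := exists_q a b hgcd hL2
  have hrcross : a * (b - q2) - b * (a - q1) = -1 := by linarith [hcross]
  have hrdot : a * (a - q1) + b * (b - q2) = a ^ 2 + b ^ 2 - (a * q1 + b * q2) := by ring
  have hqshort : q1 ^ 2 + q2 ^ 2 < a ^ 2 + b ^ 2 :=
    short a b q1 q2 (by rw [hcross]; norm_num) hm1 hm2 hL2
  have hrshort : (a - q1) ^ 2 + (b - q2) ^ 2 < a ^ 2 + b ^ 2 :=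
    short a b (a - q1) (b - q2) (by rw [hrcross]; norm_num)
      (by rw [hrdot]; linarith) (by rw [hrdot]; linarith) hL2
  refine ⟨(q1, q2), (a - q1, b - q2), ?_, ?_, ?_, ?_, ?_, ?_, ?_, ?_⟩
  · rfl
  · exact Int.isCoprime_iff_gcd_eq_one.mp ⟨-b, a, show -b * q1 + a * q2 = 1 by linarith [hcross]⟩
  · exact Int.isCoprime_iff_gcd_eq_one.mp ⟨b, -a, show b * (a - q1) + -a * (b - q2) = 1 by linarith [hrcross]⟩
  · exact Real.sqrt_lt_sqrt (by positivity) (by exact_mod_cast hqshort)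
  · exact Real.sqrt_lt_sqrt (by positivity) (by exact_mod_cast hrshort)
  · rw [show (a, b).1 * (q1, q2).2 - (a, b).2 * (q1, q2).1 = 1 from hcross]; norm_num
  · rw [show (a, b).1 * (a - q1, b - q2).2 - (a, b).2 * (a - q1, b - q2).1 = -1 from
      hrcross]; norm_num
  · have hp : toR (a, b) = toR (q1, q2) + toR (a - q1, b - q2) := by
      simp only [toR, Prod.mk_add_mk, Prod.mk.injEq]
      constructor <;> push_cast <;> ring
    have h00 : ((0, 0) : ℝ × ℝ) = 0 := rfl
    rw [h00, hp]
    exact geom (toR (q1, q2)) (toR (a - q1, b - q2))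
end

section
/- Let p, q ∈ ℤ² with p ≠ q. Then there exist a point t ∈ ℤ² and two finite multisets A and B, each of whose elements is the x-unit segment I_x, the y-unit segment I_y, or a unit triangle, such that [p,q] + Σ_{C ∈ B} C = {t} + Σ_{C ∈ A} C, where Σ denotes the Minkowski sum of the members of the multiset. (Equivalently, [p,q] = t + k_x I_x + k_y I_y + Σ_{T ∈ S} k_T T as a signed Minkowski decomposition with integer coefficients.) -/
open Pointwise

/-- The `x`-unit segment `conv{(0,0),(1,0)}`. -/
noncomputable def Ix : Set (ℝ × ℝ) := segment ℝ (0, 0) (1, 0)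

/-- The `y`-unit segment `conv{(0,0),(0,1)}`. -/
noncomputable def Iy : Set (ℝ × ℝ) := segment ℝ (0, 0) (0, 1)

/-- A unit triangle: a minimum integral triangle (area 1/2, i.e. `|det| = 1`) with all
vertex coordinates nonnegative, at least one vertex on the `y`-axis and at least one
vertex on the `x`-axis. -/
def IsUnitTriangle (T : Set (ℝ × ℝ)) : Prop :=
  ∃ p₁ p₂ p₃ : ℤ × ℤ,
    T = convexHull ℝ ({toR p₁, toR p₂, toR p₃} : Set (ℝ × ℝ)) ∧
    |(p₂.1 - p₁.1) * (p₃.2 - p₁.2) - (p₂.2 - p₁.2) * (p₃.1 - p₁.1)| = 1 ∧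
    0 ≤ p₁.1 ∧ 0 ≤ p₁.2 ∧ 0 ≤ p₂.1 ∧ 0 ≤ p₂.2 ∧ 0 ≤ p₃.1 ∧ 0 ≤ p₃.2 ∧
    (p₁.1 = 0 ∨ p₂.1 = 0 ∨ p₃.1 = 0) ∧ (p₁.2 = 0 ∨ p₂.2 = 0 ∨ p₃.2 = 0)

/-! ### Auxiliary lemmas -/

@[simp] lemma toR_add (a b : ℤ × ℤ) : toR (a + b) = toR a + toR b := by
  simp [toR, Prod.ext_iff]

@[simp] lemma toR_zero : toR 0 = 0 := by simp [toR, Prod.ext_iff]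

@[simp] lemma toR_neg (a : ℤ × ℤ) : toR (-a) = - toR a := by simp [toR, Prod.ext_iff]

lemma sing_add_sing (x y : ℤ × ℤ) :
    ({toR x} : Set (ℝ × ℝ)) + {toR y} = {toR (x + y)} := by
  rw [Set.singleton_add_singleton, toR_add]

lemma sing_toR_zero : ({toR 0} : Set (ℝ × ℝ)) = 0 := by rw [toR_zero]; rfl

lemma trans_cancel {X Y : Set (ℝ × ℝ)} (c : ℝ × ℝ) (h : X + {c} = Y + {c}) : X = Y := by
  have h2 := congrArg (· + ({-c} : Set (ℝ × ℝ))) h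
  simp only [add_assoc, Set.singleton_add_singleton, add_neg_cancel] at h2
  simpa using h2

lemma singleton_add_seg (x a b : ℝ × ℝ) :
    ({x} : Set (ℝ × ℝ)) + segment ℝ a b = segment ℝ (x + a) (x + b) := by
  rw [Set.singleton_add]
  exact segment_translate_image ℝ x a b

lemma hexagon (u w : ℝ × ℝ) :
    convexHull ℝ {0, u, u + w} + convexHull ℝ {0, w, u + w} =
      segment ℝ 0 u + segment ℝ 0 w + segment ℝ 0 (u + w) := by
  rw [← convexHull_pair, ← convexHull_pair, ← convexHull_pair, ← convexHull_add,
    ← convexHull_add, ← convexHull_add]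
  congr 1
  simp only [Set.insert_eq, Set.union_add, Set.add_union, Set.singleton_add_singleton]
  ext z
  simp only [Set.mem_union, Set.mem_singleton_iff]
  constructor <;> intro h <;> ring_nf at h ⊢ <;> tauto

lemma seg_split (x : ℝ × ℝ) (r : ℝ) (hr : 0 ≤ r) :
    segment ℝ 0 x + segment ℝ 0 (r • x) = segment ℝ 0 (x + r • x) := by
  have hr1 : (0:ℝ) < 1 + r := by linarith
  have key : ∀ t : ℝ, 0 ≤ t → t ≤ 1 + r → t • x ∈ segment ℝ 0 (x + r • x) := by
    intro t ht ht'
    refine ⟨1 - t / (1 + r), t / (1 + r), ?_, by positivity, by ring, ?_⟩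
    · rw [sub_nonneg]; exact div_le_one_of_le₀ ht' hr1.le
    · rw [smul_zero, zero_add]
      match_scalars
      field_simp
  rw [← convexHull_pair, ← convexHull_pair, ← convexHull_pair, ← convexHull_add]
  apply le_antisymm
  · apply convexHull_min _ (convex_convexHull ℝ _)
    rintro z ⟨a, (rfl|rfl), b, (rfl|rfl), rfl⟩ <;> rw [convexHull_pair]
    · simpa using key 0 le_rfl (by linarith)
    · simpa using key r hr (by linarith)
    · simpa using key 1 zero_le_one (by linarith)
    · simpa [add_smul] using key (1 + r) hr1.le le_rfl
  · apply convexHull_mono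
    rintro z (rfl | rfl)
    · exact ⟨0, by simp, 0, by simp, by simp⟩
    · exact ⟨x, by simp, r • x, by simp, rfl⟩

lemma shift_hull (s a b c : ℤ × ℤ) :
    ({toR s} : Set (ℝ × ℝ)) + convexHull ℝ ({toR a, toR b, toR c} : Set (ℝ × ℝ)) =
      convexHull ℝ ({toR (s + a), toR (s + b), toR (s + c)} : Set (ℝ × ℝ)) := by
  rw [← convexHull_singleton (𝕜 := ℝ) (toR s), ← convexHull_add]
  congr 1
  simp [Set.singleton_add, Set.image_insert_eq, toR_add]

/-- The main invariant: the segment `[0, v]` has a signed decomposition. -/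
def Good (v : ℤ × ℤ) : Prop :=
  ∃ (t : ℤ × ℤ) (A B : Multiset (Set (ℝ × ℝ))),
    (∀ C ∈ A, C = Ix ∨ C = Iy ∨ IsUnitTriangle C) ∧
    (∀ C ∈ B, C = Ix ∨ C = Iy ∨ IsUnitTriangle C) ∧
    segment ℝ 0 (toR v) + B.sum = ({toR t} : Set (ℝ × ℝ)) + A.sum

lemma good_neg {v : ℤ × ℤ} (h : Good v) : Good (-v) := by
  obtain ⟨t, A, B, hA, hB, he⟩ := h
  refine ⟨t - v, A, B, hA, hB, ?_⟩
  have hseg : segment ℝ 0 (toR (-v)) = {toR (-v)} + segment ℝ 0 (toR v) := by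
    rw [singleton_add_seg, add_zero, toR_neg, neg_add_cancel, segment_symm]
  rw [hseg, add_assoc, he, ← add_assoc, sing_add_sing]
  have : -v + t = t - v := by ring
  rw [this]

lemma good_collinear {u w : ℤ × ℤ} (r : ℝ) (hr : 0 ≤ r) (hw : toR w = r • toR u)
    (h1 : Good u) (h2 : Good w) : Good (u + w) := by
  obtain ⟨a, A₁, B₁, hA₁, hB₁, e₁⟩ := h1
  obtain ⟨b, A₂, B₂, hA₂, hB₂, e₂⟩ := h2
  refine ⟨a + b, A₁ + A₂, B₁ + B₂, ?_, ?_, ?_⟩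
  · intro C hC; rcases Multiset.mem_add.1 hC with h | h
    exacts [hA₁ C h, hA₂ C h]
  · intro C hC; rcases Multiset.mem_add.1 hC with h | h
    exacts [hB₁ C h, hB₂ C h]
  · have hsplit : segment ℝ 0 (toR (u + w)) =
        segment ℝ 0 (toR u) + segment ℝ 0 (toR w) := by
      rw [toR_add, hw, seg_split _ r hr]
    rw [hsplit, Multiset.sum_add, Multiset.sum_add, ← sing_add_sing]
    calc segment ℝ 0 (toR u) + segment ℝ 0 (toR w) + (B₁.sum + B₂.sum)
        = (segment ℝ 0 (toR u) + B₁.sum) + (segment ℝ 0 (toR w) + B₂.sum) := by abel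
      _ = ({toR a} + A₁.sum) + ({toR b} + A₂.sum) := by rw [e₁, e₂]
      _ = {toR a} + {toR b} + (A₁.sum + A₂.sum) := by abel

lemma good_step (u w s : ℤ × ℤ)
    (h1 : IsUnitTriangle
      (({toR s} : Set (ℝ × ℝ)) + convexHull ℝ ({0, toR u, toR u + toR w} : Set (ℝ × ℝ))))
    (h2 : IsUnitTriangle
      (({toR s} : Set (ℝ × ℝ)) + convexHull ℝ ({0, toR w, toR u + toR w} : Set (ℝ × ℝ))))
    (hu : Good u) (hw : Good w) : Good (u + w) := by
  obtain ⟨a, A₁, B₁, hA₁, hB₁, e₁⟩ := hu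
  obtain ⟨b, A₂, B₂, hA₂, hB₂, e₂⟩ := hw
  set T1 : Set (ℝ × ℝ) :=
    ({toR s} : Set (ℝ × ℝ)) + convexHull ℝ ({0, toR u, toR u + toR w} : Set (ℝ × ℝ)) with hT1
  set T2 : Set (ℝ × ℝ) :=
    ({toR s} : Set (ℝ × ℝ)) + convexHull ℝ ({0, toR w, toR u + toR w} : Set (ℝ × ℝ)) with hT2
  refine ⟨-(a + b + s + s), T1 ::ₘ T2 ::ₘ (B₁ + B₂), A₁ + A₂, ?_, ?_, ?_⟩
  · intro C hC
    rcases Multiset.mem_cons.1 hC with rfl | hC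
    · exact Or.inr (Or.inr h1)
    rcases Multiset.mem_cons.1 hC with rfl | hC
    · exact Or.inr (Or.inr h2)
    rcases Multiset.mem_add.1 hC with h | h
    exacts [hB₁ C h, hB₂ C h]
  · intro C hC; rcases Multiset.mem_add.1 hC with h | h
    exacts [hA₁ C h, hA₂ C h]
  · apply trans_cancel (toR (a + b))
    have hex : T1 + T2 = segment ℝ 0 (toR u) + segment ℝ 0 (toR w) +
        segment ℝ 0 (toR u + toR w) + {toR (s + s)} := by
      rw [hT1, hT2, ← sing_add_sing]
      calc ({toR s} + convexHull ℝ ({0, toR u, toR u + toR w} : Set (ℝ × ℝ))) +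
            ({toR s} + convexHull ℝ ({0, toR w, toR u + toR w} : Set (ℝ × ℝ)))
          = convexHull ℝ ({0, toR u, toR u + toR w} : Set (ℝ × ℝ)) +
            convexHull ℝ ({0, toR w, toR u + toR w} : Set (ℝ × ℝ)) +
            ({toR s} + {toR s}) := by abel
        _ = _ := by rw [hexagon]
    have hL : segment ℝ 0 (toR (u + w)) + (A₁ + A₂).sum + {toR (a + b)} =
        segment ℝ 0 (toR u) + segment ℝ 0 (toR w) + segment ℝ 0 (toR u + toR w) +
          (B₁.sum + B₂.sum) := by
      have step1 : segment ℝ 0 (toR (u + w)) + (A₁ + A₂).sum + {toR (a + b)} =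
          segment ℝ 0 (toR u + toR w) + (({toR a} + A₁.sum) + ({toR b} + A₂.sum)) := by
        rw [toR_add, Multiset.sum_add, ← sing_add_sing]; abel
      rw [step1, ← e₁, ← e₂]; abel
    rw [hL]
    rw [Multiset.sum_cons, Multiset.sum_cons, Multiset.sum_add]
    have r1 : ({toR (-(a + b + s + s))} + (T1 + (T2 + (B₁.sum + B₂.sum)))) + {toR (a + b)} =
        T1 + T2 + (B₁.sum + B₂.sum) + ({toR (-(a + b + s + s))} + {toR (a + b)}) := by abel
    rw [r1, sing_add_sing]
    have r2 : -(a + b + s + s) + (a + b) = -(s + s) := by ring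
    rw [r2, hex]
    have r3 : segment ℝ 0 (toR u) + segment ℝ 0 (toR w) + segment ℝ 0 (toR u + toR w) +
          ({toR (s + s)} : Set (ℝ × ℝ)) + (B₁.sum + B₂.sum) + {toR (-(s + s))} =
        segment ℝ 0 (toR u) + segment ℝ 0 (toR w) + segment ℝ 0 (toR u + toR w) +
          (B₁.sum + B₂.sum) + ({toR (s + s)} + {toR (-(s + s))}) := by abel
    rw [r3, sing_add_sing]
    have r4 : s + s + -(s + s) = 0 := by ring
    rw [r4, sing_toR_zero, add_zero]

lemma bezout_box (a b : ℤ) (ha : 0 < a) (hb : 0 < b) (h : Int.gcd a b = 1) :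
    ∃ c d : ℤ, 0 ≤ c ∧ c < a ∧ 1 ≤ d ∧ d ≤ b ∧ a * d - b * c = 1 := by
  have hb1 : a * Int.gcdA a b + b * Int.gcdB a b = 1 := by
    have h2 := Int.gcd_eq_gcd_ab a b
    rw [h] at h2; exact_mod_cast h2.symm
  set c := (-Int.gcdB a b) % a with hc
  have hc0 : 0 ≤ c := Int.emod_nonneg _ ha.ne'
  have hca : c < a := Int.emod_lt_of_pos _ ha
  have hdvd : a ∣ 1 + b * c := by
    have hmod : c = -Int.gcdB a b - a * (-Int.gcdB a b / a) := by rw [hc, Int.emod_def]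
    exact ⟨Int.gcdA a b - b * (-Int.gcdB a b / a), by rw [hmod]; linear_combination -hb1⟩
  obtain ⟨d, hd⟩ := hdvd
  have hd1 : 1 ≤ d := by
    by_contra hcon
    push_neg at hcon
    nlinarith [mul_nonneg hb.le hc0]
  have hdb : d ≤ b := by
    have h1 : a * d ≤ a * b := by nlinarith
    exact le_of_mul_le_mul_left h1 ha
  exact ⟨c, d, hc0, hca, hd1, hdb, by linarith⟩

lemma isUnitTriangle_shift (s u w : ℤ × ℤ)
    (hdet : |u.1 * w.2 - u.2 * w.1| = 1)
    (hs1 : 0 ≤ s.1) (hs2 : 0 ≤ s.2) (hu1 : 0 ≤ s.1 + u.1) (hu2 : 0 ≤ s.2 + u.2)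
    (hv1 : 0 ≤ s.1 + u.1 + w.1) (hv2 : 0 ≤ s.2 + u.2 + w.2)
    (hx : s.1 = 0 ∨ s.1 + u.1 = 0 ∨ s.1 + u.1 + w.1 = 0)
    (hy : s.2 = 0 ∨ s.2 + u.2 = 0 ∨ s.2 + u.2 + w.2 = 0) :
    IsUnitTriangle
      (({toR s} : Set (ℝ × ℝ)) + convexHull ℝ ({0, toR u, toR u + toR w} : Set (ℝ × ℝ))) := by
  refine ⟨s, s + u, s + u + w, ?_, ?_, ?_, ?_, ?_, ?_, ?_, ?_, ?_, ?_⟩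
  · have hset : ({(0:ℝ×ℝ), toR u, toR u + toR w} : Set (ℝ × ℝ)) =
        {toR 0, toR u, toR (u + w)} := by rw [toR_zero, toR_add]
    rw [hset, shift_hull, add_zero, ← add_assoc]
  · have heq : ((s + u).1 - s.1) * ((s + u + w).2 - s.2) -
        ((s + u).2 - s.2) * ((s + u + w).1 - s.1) = u.1 * w.2 - u.2 * w.1 := by
      simp only [Prod.fst_add, Prod.snd_add]; ring
    rw [heq]; exact hdet
  · exact hs1
  · exact hs2
  · simpa using hu1
  · simpa using hu2
  · simpa [add_assoc] using hv1
  · simpa [add_assoc] using hv2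
  · simpa [add_assoc] using hx
  · simpa [add_assoc] using hy

lemma good_Ix : Good (1, 0) := by
  refine ⟨0, {Ix}, 0, by simp, by simp, ?_⟩
  rw [Multiset.sum_zero, add_zero, sing_toR_zero, zero_add, Multiset.sum_singleton]
  show segment ℝ 0 (toR (1, 0)) = Ix
  unfold Ix toR
  norm_num [Prod.mk_zero_zero]

lemma good_Iy : Good (0, 1) := by
  refine ⟨0, {Iy}, 0, by simp, by simp, ?_⟩
  rw [Multiset.sum_zero, add_zero, sing_toR_zero, zero_add, Multiset.sum_singleton]
  show segment ℝ 0 (toR (0, 1)) = Iy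
  unfold Iy toR
  norm_num [Prod.mk_zero_zero]

lemma good_negIy : Good (0, -1) := by
  have h := good_neg good_Iy
  simpa using h

lemma pair_ne_zero {x y : ℤ} (h : ¬(x = 0 ∧ y = 0)) : ((x, y) : ℤ × ℤ) ≠ 0 := by
  intro hxy
  rw [Prod.ext_iff] at hxy
  exact h ⟨by simpa using hxy.1, by simpa using hxy.2⟩

lemma good_nonneg : ∀ n : ℕ, ∀ v : ℤ × ℤ, v ≠ 0 → 0 ≤ v.1 →
    v.1.natAbs + v.2.natAbs ≤ n → Good v := by
  intro n
  induction n with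
  | zero =>
    rintro ⟨a, b⟩ hv _ hm
    simp only at hm
    refine absurd ?_ hv
    rw [Prod.ext_iff]
    simp only [Prod.fst_zero, Prod.snd_zero]
    constructor <;> omega
  | succ n ih =>
    rintro ⟨a, b⟩ hv ha hm
    simp only at ha hm
    have hab : ¬(a = 0 ∧ b = 0) := fun h => hv (by simp [Prod.ext_iff, h.1, h.2])
    rcases eq_or_ne b 0 with rfl | hb
    · -- horizontal segment
      have ha1 : 1 ≤ a := by omega
      rcases eq_or_ne a 1 with rfl | ha2
      · exact good_Ix
      · have key : ((a, 0) : ℤ × ℤ) = (1, 0) + (a - 1, 0) := by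
          rw [Prod.mk_add_mk]; norm_num
        rw [key]
        refine good_collinear ((a : ℝ) - 1)
          (by have h' : (1:ℝ) ≤ (a:ℝ) := (by exact_mod_cast ha1); linarith) ?_ good_Ix ?_
        · simp only [toR, Prod.smul_mk, smul_eq_mul, Prod.mk.injEq]
          push_cast; constructor <;> ring
        · refine ih (a - 1, 0) ?_ (by show (0:ℤ) ≤ a - 1; omega)
            (by show (a - 1).natAbs + (0:ℤ).natAbs ≤ n; omega)
          exact pair_ne_zero (by omega)
    · rcases eq_or_ne a 0 with rfl | ha0
      · -- vertical segment
        rcases eq_or_ne b 1 with rfl | hb1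
        · exact good_Iy
        rcases eq_or_ne b (-1) with rfl | hbm1
        · exact good_negIy
        rcases lt_or_gt_of_ne hb with hbneg | hbpos
        · -- b ≤ -2
          have key : ((0, b) : ℤ × ℤ) = (0, -1) + (0, b + 1) := by
            rw [Prod.mk_add_mk]; norm_num
          rw [key]
          refine good_collinear (-(b : ℝ) - 1)
            (by have h' : (b:ℝ) ≤ -2 := (by exact_mod_cast (by omega : b ≤ -2)); linarith)
            ?_ good_negIy ?_
          · simp only [toR, Prod.smul_mk, smul_eq_mul, Prod.mk.injEq]
            push_cast; constructor <;> ring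
          · refine ih (0, b + 1) ?_ (by show (0:ℤ) ≤ 0; omega)
              (by show (0:ℤ).natAbs + (b + 1).natAbs ≤ n; omega)
            exact pair_ne_zero (by omega)
        · -- b ≥ 2
          have key : ((0, b) : ℤ × ℤ) = (0, 1) + (0, b - 1) := by
            rw [Prod.mk_add_mk]; norm_num
          rw [key]
          refine good_collinear ((b : ℝ) - 1)
            (by have h' : (1:ℝ) ≤ (b:ℝ) := (by exact_mod_cast (by omega : 1 ≤ b)); linarith)
            ?_ good_Iy ?_
          · simp only [toR, Prod.smul_mk, smul_eq_mul, Prod.mk.injEq]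
            push_cast; constructor <;> ring
          · refine ih (0, b - 1) ?_ (by show (0:ℤ) ≤ 0; omega)
              (by show (0:ℤ).natAbs + (b - 1).natAbs ≤ n; omega)
            exact pair_ne_zero (by omega)
      · -- a ≥ 1, b ≠ 0
        have ha1 : 1 ≤ a := by omega
        set g : ℕ := Int.gcd a b with hg
        rcases eq_or_ne g 1 with hg1 | hgne
        · -- coprime : Bezout step
          rcases lt_or_gt_of_ne hb with hbneg | hbpos
          · -- b < 0
            have hgcd : Int.gcd a (-b) = 1 := by
              rw [Int.gcd, Int.natAbs_neg]; exact hg1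
            obtain ⟨c, d, hc0, hca, hd1, hdb, hdet⟩ :=
              bezout_box a (-b) (by omega) (by omega) hgcd
            have key : ((a, b) : ℤ × ℤ) = (c, -d) + (a - c, b + d) := by
              rw [Prod.mk_add_mk]; norm_num
            rw [key]
            apply good_step _ _ (0, -b)
            · apply isUnitTriangle_shift (0, -b) (c, -d) (a - c, b + d)
              · show |c * (b + d) - -d * (a - c)| = 1
                have : c * (b + d) - -d * (a - c) = 1 := by linear_combination hdet
                rw [this]; norm_num
              · show (0:ℤ) ≤ 0; omega
              · show (0:ℤ) ≤ -b; omega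
              · show (0:ℤ) ≤ 0 + c; omega
              · show (0:ℤ) ≤ -b + -d; omega
              · show (0:ℤ) ≤ 0 + c + (a - c); omega
              · show (0:ℤ) ≤ -b + -d + (b + d); omega
              · left; rfl
              · right; right; show -b + -d + (b + d) = 0; ring
            · have h2 := isUnitTriangle_shift (0, -b) (a - c, b + d) (c, -d)
                (by show |(a - c) * -d - (b + d) * c| = 1
                    have : (a - c) * -d - (b + d) * c = -1 := by linear_combination -hdet
                    rw [this]; norm_num)
                (by show (0:ℤ) ≤ 0; omega)
                (by show (0:ℤ) ≤ -b; omega)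
                (by show (0:ℤ) ≤ 0 + (a - c); omega)
                (by show (0:ℤ) ≤ -b + (b + d); omega)
                (by show (0:ℤ) ≤ 0 + (a - c) + c; omega)
                (by show (0:ℤ) ≤ -b + (b + d) + -d; omega)
                (Or.inl rfl)
                (by right; right; show -b + (b + d) + -d = 0; ring)
              rwa [add_comm (toR ((a - c, b + d) : ℤ × ℤ)) (toR ((c, -d) : ℤ × ℤ))] at h2
            · refine ih (c, -d) ?_ (by show (0:ℤ) ≤ c; omega)
                (by show c.natAbs + (-d).natAbs ≤ n; omega)
              exact pair_ne_zero (by omega)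
            · refine ih (a - c, b + d) ?_ (by show (0:ℤ) ≤ a - c; omega)
                (by show (a - c).natAbs + (b + d).natAbs ≤ n; omega)
              exact pair_ne_zero (by omega)
          · -- b > 0
            obtain ⟨c, d, hc0, hca, hd1, hdb, hdet⟩ :=
              bezout_box a b (by omega) (by omega) hg1
            have key : ((a, b) : ℤ × ℤ) = (c, d) + (a - c, b - d) := by
              rw [Prod.mk_add_mk]; norm_num
            rw [key]
            apply good_step _ _ 0
            · apply isUnitTriangle_shift 0 (c, d) (a - c, b - d)
              · show |c * (b - d) - d * (a - c)| = 1
                have : c * (b - d) - d * (a - c) = -1 := by linear_combination -hdet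
                rw [this]; norm_num
              · show (0:ℤ) ≤ 0; omega
              · show (0:ℤ) ≤ 0; omega
              · show (0:ℤ) ≤ 0 + c; omega
              · show (0:ℤ) ≤ 0 + d; omega
              · show (0:ℤ) ≤ 0 + c + (a - c); omega
              · show (0:ℤ) ≤ 0 + d + (b - d); omega
              · left; rfl
              · left; rfl
            · have h2 := isUnitTriangle_shift 0 (a - c, b - d) (c, d)
                (by show |(a - c) * d - (b - d) * c| = 1
                    have : (a - c) * d - (b - d) * c = 1 := by linear_combination hdet
                    rw [this]; norm_num)
                (by show (0:ℤ) ≤ 0; omega)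
                (by show (0:ℤ) ≤ 0; omega)
                (by show (0:ℤ) ≤ 0 + (a - c); omega)
                (by show (0:ℤ) ≤ 0 + (b - d); omega)
                (by show (0:ℤ) ≤ 0 + (a - c) + c; omega)
                (by show (0:ℤ) ≤ 0 + (b - d) + d; omega)
                (Or.inl rfl)
                (Or.inl rfl)
              rwa [add_comm (toR ((a - c, b - d) : ℤ × ℤ)) (toR ((c, d) : ℤ × ℤ))] at h2
            · refine ih (c, d) ?_ (by show (0:ℤ) ≤ c; omega)
                (by show c.natAbs + d.natAbs ≤ n; omega)
              exact pair_ne_zero (by omega)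
            · refine ih (a - c, b - d) ?_ (by show (0:ℤ) ≤ a - c; omega)
                (by show (a - c).natAbs + (b - d).natAbs ≤ n; omega)
              exact pair_ne_zero (by omega)
        · -- non-primitive : split off a primitive copy
          have hgpos : 1 ≤ g := by
            rcases Nat.eq_zero_or_pos g with h0 | h1
            · exfalso
              have h2 : a = 0 ∧ b = 0 := Int.gcd_eq_zero_iff.1 (hg ▸ h0)
              omega
            · exact h1
          have hg2 : 2 ≤ g := by omega
          obtain ⟨k, hk⟩ : ∃ k : ℕ, g = k + 1 := ⟨g - 1, by omega⟩
          have hk1 : 1 ≤ k := by omega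
          obtain ⟨a₀, ha₀⟩ : (g : ℤ) ∣ a := hg ▸ Int.gcd_dvd_left a b
          obtain ⟨b₀, hb₀⟩ : (g : ℤ) ∣ b := hg ▸ Int.gcd_dvd_right a b
          have hgz : (2:ℤ) ≤ (g:ℤ) := by exact_mod_cast hg2
          have ha₀pos : 1 ≤ a₀ := by nlinarith
          have key : ((a, b) : ℤ × ℤ) = (a₀, b₀) + (a - a₀, b - b₀) := by
            rw [Prod.mk_add_mk]; norm_num
          have hna : a.natAbs = g * a₀.natAbs := by
            rw [ha₀, Int.natAbs_mul, Int.natAbs_natCast]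
          have hnb : b.natAbs = g * b₀.natAbs := by
            rw [hb₀, Int.natAbs_mul, Int.natAbs_natCast]
          have hm0 : 1 ≤ a₀.natAbs + b₀.natAbs := by omega
          have hgm : g * (a₀.natAbs + b₀.natAbs) ≤ n + 1 := by
            rw [Nat.mul_add, ← hna, ← hnb]; exact hm
          have hmul : 2 * (a₀.natAbs + b₀.natAbs) ≤ g * (a₀.natAbs + b₀.natAbs) :=
            Nat.mul_le_mul_right _ hg2
          have hm1 : a₀.natAbs + b₀.natAbs ≤ n := by
            have h2M : 2 * (a₀.natAbs + b₀.natAbs) ≤ n + 1 := le_trans hmul hgm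
            omega
          have hsub1 : a - a₀ = ((g : ℤ) - 1) * a₀ := by rw [ha₀]; ring
          have hsub2 : b - b₀ = ((g : ℤ) - 1) * b₀ := by rw [hb₀]; ring
          have hgk : ((g : ℤ) - 1).natAbs = k := by omega
          have hna2 : (a - a₀).natAbs = k * a₀.natAbs := by
            rw [hsub1, Int.natAbs_mul, hgk]
          have hnb2 : (b - b₀).natAbs = k * b₀.natAbs := by
            rw [hsub2, Int.natAbs_mul, hgk]
          have hid : k * a₀.natAbs + k * b₀.natAbs + (a₀.natAbs + b₀.natAbs) =
              g * (a₀.natAbs + b₀.natAbs) := by rw [hk]; ring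
          have hm2 : (a - a₀).natAbs + (b - b₀).natAbs ≤ n := by
            rw [hna2, hnb2]; linarith [hgm, hm0, hid]
          have hwpos : a₀ ≤ a - a₀ := by nlinarith [hsub1]
          rw [key]
          refine good_collinear ((g : ℝ) - 1)
            (by have h' : (1:ℝ) ≤ (g:ℝ) := (by exact_mod_cast hgpos); linarith) ?_ ?_ ?_
          · simp only [toR, Prod.smul_mk, smul_eq_mul, Prod.mk.injEq]
            constructor
            · have h3 := congrArg (fun z : ℤ => (z : ℝ)) hsub1
              push_cast at h3 ⊢; linarith
            · have h3 := congrArg (fun z : ℤ => (z : ℝ)) hsub2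
              push_cast at h3 ⊢; linarith
          · refine ih (a₀, b₀) ?_ (by show (0:ℤ) ≤ a₀; omega)
              (by show a₀.natAbs + b₀.natAbs ≤ n; omega)
            exact pair_ne_zero (by omega)
          · refine ih (a - a₀, b - b₀) ?_ (by show (0:ℤ) ≤ a - a₀; omega)
              (by show (a - a₀).natAbs + (b - b₀).natAbs ≤ n; omega)
            exact pair_ne_zero (by omega)

lemma good_any (v : ℤ × ℤ) (hv : v ≠ 0) : Good v := by
  rcases le_or_gt 0 v.1 with h | h
  · exact good_nonneg _ v hv h le_rfl
  · have h2 := good_neg (good_nonneg _ (-v) (neg_ne_zero.2 hv)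
      (by simp only [Prod.fst_neg]; omega) le_rfl)
    simpa using h2

/-- Every integral segment `[p,q]` has a signed Minkowski decomposition
into a translation, unit segments, and unit triangles:
`[p,q] + Σ_{C ∈ B} C = {t} + Σ_{C ∈ A} C`. -/
theorem integral_segment_signed_decomposition (p q : ℤ × ℤ) (hpq : p ≠ q) :
    ∃ (t : ℤ × ℤ) (A B : Multiset (Set (ℝ × ℝ))),
      (∀ C ∈ A, C = Ix ∨ C = Iy ∨ IsUnitTriangle C) ∧
      (∀ C ∈ B, C = Ix ∨ C = Iy ∨ IsUnitTriangle C) ∧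
      segment ℝ (toR p) (toR q) + B.sum = ({toR t} : Set (ℝ × ℝ)) + A.sum := by
  have hv : q - p ≠ 0 := sub_ne_zero.2 hpq.symm
  obtain ⟨t, A, B, hA, hB, he⟩ := good_any (q - p) hv
  refine ⟨p + t, A, B, hA, hB, ?_⟩
  have hseg : segment ℝ (toR p) (toR q) = {toR p} + segment ℝ 0 (toR (q - p)) := by
    rw [singleton_add_seg, add_zero, ← toR_add]
    congr 2
    ring
  rw [hseg, add_assoc, he, ← add_assoc, sing_add_sing]
end
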